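/- Define the sequence f_n for n \ge 1 by f_1 = E_1 = 1 and the recursion f_n = (1/(2n-1)) \sum_{i=1}^{n-1} \binom{3n-2}{3i-1} g_i g_{n-i} where g_i = (3i-1) f_i / 2. Then f_n = (3n-2)! E_{2n-1} / ((2n-1)! 2^{2n-2}) for all n \ge 1, where E_{2n-1} are the tangent numbers. -/

import Mathlib

open scoped BigOperators

/-- A list of integers is *up-down* (alternating) if it rises, falls, rises, ... -/
def IsUpDown (l : List ℤ) : Prop :=
  ∀ i : ℕ, i + 1 < l.length →
    (Even i → l.getD i 0 < l.getD (i + 1) 0) ∧ (¬ Even i → l.getD (i + 1) 0 < l.getD i 0)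

/-- A list of integers is *down-up* if it falls, rises, falls, ... -/
def IsDownUp (l : List ℤ) : Prop :=
  ∀ i : ℕ, i + 1 < l.length →
    (Even i → l.getD (i + 1) 0 < l.getD i 0) ∧ (¬ Even i → l.getD i 0 < l.getD (i + 1) 0)

/-- The list `[1, 2, ..., m]` as integers. -/
def baseList (m : ℕ) : List ℤ := (List.range m).map fun k => (k : ℤ) + 1

/-- The Euler number `E_m`: the number of up-down permutations of `{1, ..., m}`. -/
noncomputable def eulerNum (m : ℕ) : ℕ :=
  Nat.card {l : List ℤ // l.Perm (baseList m) ∧ IsUpDown l}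

/-!
Cutting an up-down permutation of `{1, …, N + 1}` (with `N` even) at its maximum `N + 1` leaves an
up-down permutation of some subset `S` on the left and one of the complement on the right; the
maximum is a peak, so it sits at an odd position and `|S|` is odd. The number of up-down
permutations of a set depends only on its size (relabel along the order-preserving bijection), so
`E_{2n-1} = ∑_i C(2n-2, 2i-1) E_{2i-1} E_{2n-2i-1}`. With `f_i` replaced by the closed form,
each summand of the recursion for `f_n` is `(3n-2)! / ((2n-2)! 2^{2n-2})` times the corresponding
summand of this identity, so the closed form satisfies the recursion of `f` and agrees with it at
`n = 1`.
-/

open Finset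

open Classical in
noncomputable def upDownPerms (s : List ℤ) : Finset (List ℤ) :=
  s.permutations.toFinset.filter IsUpDown

theorem mem_upDownPerms {s l : List ℤ} : l ∈ upDownPerms s ↔ l.Perm s ∧ IsUpDown l := by
  simp [upDownPerms, List.mem_permutations]

theorem eulerNum_eq_card (m : ℕ) : eulerNum m = #(upDownPerms (baseList m)) := by
  rw [← Nat.card_eq_finsetCard]
  exact Nat.card_congr (Equiv.subtypeEquivRight fun _ => mem_upDownPerms.symm)

theorem isUpDown_iff_getElem {l : List ℤ} :
    IsUpDown l ↔ ∀ i (h : i + 1 < l.length),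
      (Even i → l[i] < l[i + 1]) ∧ (¬ Even i → l[i + 1] < l[i]) := by
  refine forall_congr' fun i => forall_congr' fun hi => ?_
  rw [List.getD_eq_getElem _ _ (by omega), List.getD_eq_getElem _ _ hi]

theorem isUpDown_map_iff {l : List ℤ} {f : ℤ → ℤ} (hf : StrictMonoOn f {x | x ∈ l}) :
    IsUpDown (l.map f) ↔ IsUpDown l := by
  simp only [isUpDown_iff_getElem, List.length_map, List.getElem_map]
  refine forall_congr' fun i => forall_congr' fun hi => ?_
  rw [hf.lt_iff_lt (List.getElem_mem _) (List.getElem_mem _),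
    hf.lt_iff_lt (List.getElem_mem _) (List.getElem_mem _)]

theorem IsUpDown.of_append_left {u v : List ℤ} (h : IsUpDown (u ++ v)) : IsUpDown u := by
  rw [isUpDown_iff_getElem] at h ⊢
  intro i hi
  have := h i (by simp; omega)
  rwa [List.getElem_append_left hi, List.getElem_append_left (Nat.lt_of_succ_lt hi)] at this

theorem IsUpDown.of_append_right {u v : List ℤ} (h : IsUpDown (u ++ v)) (hu : Even u.length) :
    IsUpDown v := by
  rw [isUpDown_iff_getElem] at h ⊢
  intro i hi
  have := h (u.length + i) (by simp; omega)
  simp only [List.getElem_append_right (Nat.le_add_right _ _),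
    show u.length + i + 1 = u.length + (i + 1) by omega, Nat.even_add, hu, true_iff] at this
  simpa using this

theorem isUpDown_append_cons_iff {u v : List ℤ} {M : ℤ} (hu : Odd u.length)
    (hub : ∀ x ∈ u, x < M) (hvb : ∀ x ∈ v, x < M) :
    IsUpDown (u ++ M :: v) ↔ IsUpDown u ∧ IsUpDown v := by
  refine ⟨fun h => ⟨h.of_append_left, ?_⟩, fun ⟨hu', hv'⟩ => ?_⟩
  · rw [List.append_cons] at h
    exact h.of_append_right (by simpa [Nat.even_add_one] using hu)
  rw [isUpDown_iff_getElem] at hu' hv' ⊢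
  simp only [Nat.even_iff] at hu' hv' ⊢
  rw [Nat.odd_iff] at hu
  intro i hi
  simp only [List.length_append, List.length_cons] at hi
  simp only [List.getElem_append, List.getElem_cons]
  split_ifs <;> grind

theorem IsUpDown.odd_length_of_append_cons {u v : List ℤ} {M : ℤ} (h : IsUpDown (u ++ M :: v))
    (hub : ∀ x ∈ u, x < M) (hvb : ∀ x ∈ v, x < M) (hlen : Even (u.length + v.length))
    (hpos : 0 < u.length + v.length) : Odd u.length := by
  rw [isUpDown_iff_getElem] at h
  simp only [Nat.even_iff] at h hlen
  rw [Nat.odd_iff]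
  by_contra hk
  rcases v with _ | ⟨w, v⟩
  · have := h (u.length - 1) (by simp; grind)
    grind
  · have := h u.length (by simp)
    grind

theorem baseList_eq_map (m : ℕ) : baseList m = (List.range m).map fun k : ℕ => (k : ℤ) + 1 :=
  (congrArg (List.map _) (List.flatMap_pure_eq_map (Nat.cast : ℕ → ℤ) _)).trans (List.map_map ..)

theorem length_baseList (m : ℕ) : (baseList m).length = m := by
  simp [baseList_eq_map]

theorem baseList_sortedLT (m : ℕ) : (baseList m).SortedLT := by
  rw [baseList_eq_map]
  exact (StrictMono.sortedLT_listMap fun _ _ h => by simpa using h).2 (List.sortedLT_range m)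

theorem mem_baseList {m : ℕ} {x : ℤ} : x ∈ baseList m ↔ 1 ≤ x ∧ x ≤ m := by
  simp only [baseList_eq_map, List.mem_map, List.mem_range]
  exact ⟨fun ⟨k, hk, hx⟩ => by omega, fun h => ⟨(x - 1).toNat, by omega, by omega⟩⟩

theorem baseList_succ (m : ℕ) : baseList (m + 1) = baseList m ++ [(m : ℤ) + 1] := by
  simp [baseList_eq_map, List.range_succ]

theorem val_toFinset_baseList (N : ℕ) : (baseList N).toFinset.val = baseList N := by
  rw [List.toFinset_val, (baseList_sortedLT N).nodup.dedup]

theorem perm_baseList_succ_iff {N : ℕ} {u v : List ℤ} :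
    (u ++ ((N : ℤ) + 1) :: v).Perm (baseList (N + 1)) ↔ (u ++ v).Perm (baseList N) := by
  rw [baseList_succ]
  exact ⟨fun h => (List.perm_middle.symm.trans (h.trans (List.perm_append_singleton _ _))).cons_inv,
    fun h => List.perm_middle.trans ((h.cons _).trans (List.perm_append_singleton _ _).symm)⟩

theorem eulerNum_one : eulerNum 1 = 1 := by
  rw [eulerNum_eq_card, card_eq_one]
  refine ⟨[1], eq_singleton_iff_unique_mem.2 ⟨?_, fun l hl => ?_⟩⟩
  · rw [mem_upDownPerms]
    exact ⟨by simp [baseList_eq_map], fun i hi => by simp at hi⟩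
  · simpa [baseList_eq_map] using (mem_upDownPerms.1 hl).1

theorem card_upDownPerms_map {s : List ℤ} {f : ℤ → ℤ} (hf : StrictMonoOn f {x | x ∈ s}) :
    #(upDownPerms (s.map f)) = #(upDownPerms s) := by
  symm
  refine card_nbij (List.map f) (fun l hl => ?_) (fun l₁ hl₁ l₂ hl₂ he => ?_) (fun l hl => ?_)
  · rw [mem_coe, mem_upDownPerms] at hl ⊢
    exact ⟨hl.1.map f, (isUpDown_map_iff (hf.mono fun x hx => hl.1.subset hx)).2 hl.2⟩
  · rw [mem_coe, mem_upDownPerms] at hl₁ hl₂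
    refine List.ext_getElem (by simpa using congrArg List.length he) fun i h₁ h₂ => ?_
    have := congrArg (·[i]?) he
    simp only [List.getElem?_map, List.getElem?_eq_getElem h₁, List.getElem?_eq_getElem h₂,
      Option.map_some, Option.some_inj] at this
    exact hf.injOn (hl₁.1.subset (List.getElem_mem _)) (hl₂.1.subset (List.getElem_mem _)) this
  · rw [mem_coe, mem_upDownPerms] at hl
    obtain ⟨l₀, hl₀, rfl⟩ := List.mem_map.1
      ((List.map_permutations f s).symm ▸ List.mem_permutations.2 hl.1)
    rw [List.mem_permutations] at hl₀
    refine ⟨l₀, mem_upDownPerms.2 ⟨hl₀, ?_⟩, rfl⟩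
    exact (isUpDown_map_iff (hf.mono fun x hx => hl₀.subset hx)).1 hl.2

theorem card_upDownPerms_of_sortedLT {s t : List ℤ} (hs : s.SortedLT) (ht : t.SortedLT)
    (hst : s.length = t.length) : #(upDownPerms s) = #(upDownPerms t) := by
  set f : ℤ → ℤ := fun x => t.getD (s.idxOf x) 0
  have hf : ∀ i (hi : i < s.length), f s[i] = t[i] := fun i hi => by
    simp [f, hs.nodup.idxOf_getElem, List.getElem?_eq_getElem (hst ▸ hi)]
  have hmap : s.map f = t :=
    List.ext_getElem (by simp [hst]) fun i hi _ => by rw [List.getElem_map, hf]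
  rw [← hmap, card_upDownPerms_map]
  intro x hx y hy hxy
  obtain ⟨i, hi, rfl⟩ := List.getElem_of_mem hx
  obtain ⟨j, hj, rfl⟩ := List.getElem_of_mem hy
  rwa [hf, hf, ht.getElem_lt_getElem_iff, ← hs.getElem_lt_getElem_iff]

theorem card_upDownPerms_sort (S : Finset ℤ) : #(upDownPerms S.sort) = eulerNum #S := by
  rw [eulerNum_eq_card]
  exact card_upDownPerms_of_sortedLT S.sortedLT_sort (baseList_sortedLT _)
    (by simp [length_baseList])

theorem perm_sort_iff_coe_eq_val {α : Type*} [LinearOrder α] {S : Finset α} {l : List α} :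
    l.Perm S.sort ↔ (l : Multiset α) = S.val := by
  rw [← Multiset.coe_eq_coe, S.sort_eq]

/-- `⟨S, u, v⟩` stands for the up-down permutation `u ++ (N + 1) :: v` of `{1, …, N + 1}`:
`u` is an up-down arrangement of `S ⊆ {1, …, N}` and `v` one of the complement. -/
noncomputable def maxSplits (N : ℕ) : Finset (Σ _ : Finset ℤ, List ℤ × List ℤ) :=
  ((baseList N).toFinset.powerset.filter fun S => Odd #S).sigma fun S =>
    upDownPerms S.sort ×ˢ upDownPerms ((baseList N).toFinset \ S).sort

theorem mem_maxSplits {N : ℕ} {S : Finset ℤ} {u v : List ℤ} :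
    ⟨S, u, v⟩ ∈ maxSplits N ↔ S ⊆ (baseList N).toFinset ∧ Odd #S ∧
      (u.Perm S.sort ∧ IsUpDown u) ∧ (v.Perm ((baseList N).toFinset \ S).sort ∧ IsUpDown v) := by
  simp [maxSplits, mem_upDownPerms, and_assoc]

theorem card_maxSplits (N : ℕ) :
    #(maxSplits N) =
      ∑ m ∈ range (N + 1), N.choose m * if Odd m then eulerNum m * eulerNum (N - m) else 0 := by
  have hB : #(baseList N).toFinset = N := by
    rw [List.toFinset_card_of_nodup (baseList_sortedLT N).nodup, length_baseList]
  rw [maxSplits, card_sigma, sum_filter]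
  trans ∑ S ∈ (baseList N).toFinset.powerset,
    if Odd #S then eulerNum #S * eulerNum (N - #S) else 0
  · refine sum_congr rfl fun S hS => ?_
    rw [card_product, card_upDownPerms_sort, card_upDownPerms_sort,
      card_sdiff_of_subset (mem_powerset.1 hS), hB]
  · rw [sum_powerset_apply_card (fun m => if Odd m then eulerNum m * eulerNum (N - m) else 0), hB]
    simp only [smul_eq_mul]

theorem lt_of_mem_baseList {N : ℕ} {x : ℤ} (hx : x ∈ baseList N) : x < N + 1 := by
  have := (mem_baseList.1 hx).2
  omega

theorem bounds_of_mem_maxSplits {N : ℕ} {S : Finset ℤ} {u v : List ℤ}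
    (h : ⟨S, u, v⟩ ∈ maxSplits N) : (∀ x ∈ u, x < N + 1) ∧ ∀ x ∈ v, x < N + 1 := by
  obtain ⟨hSB, -, ⟨hu, -⟩, hv, -⟩ := mem_maxSplits.1 h
  exact ⟨fun x hx => lt_of_mem_baseList (List.mem_toFinset.1 (hSB ((mem_sort _).1 (hu.subset hx)))),
    fun x hx => lt_of_mem_baseList
      (List.mem_toFinset.1 (mem_sdiff.1 ((mem_sort _).1 (hv.subset hx))).1)⟩

theorem append_cons_mem_upDownPerms {N : ℕ} {S : Finset ℤ} {u v : List ℤ}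
    (h : ⟨S, u, v⟩ ∈ maxSplits N) : u ++ ((N : ℤ) + 1) :: v ∈ upDownPerms (baseList (N + 1)) := by
  obtain ⟨hub, hvb⟩ := bounds_of_mem_maxSplits h
  obtain ⟨hSB, hS, ⟨hu, hu'⟩, hv, hv'⟩ := mem_maxSplits.1 h
  rw [mem_upDownPerms, perm_baseList_succ_iff,
    isUpDown_append_cons_iff (by rwa [hu.length_eq, length_sort]) hub hvb,
    ← Multiset.coe_eq_coe, ← Multiset.coe_add, perm_sort_iff_coe_eq_val.1 hu,
    perm_sort_iff_coe_eq_val.1 hv, sdiff_val, add_tsub_cancel_of_le (val_le_iff.2 hSB),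
    val_toFinset_baseList]
  exact ⟨rfl, hu', hv'⟩

theorem exists_mem_maxSplits {N : ℕ} (hN : Even N) (hN0 : N ≠ 0) {l : List ℤ}
    (hl : l ∈ upDownPerms (baseList (N + 1))) :
    ∃ S u v, ⟨S, u, v⟩ ∈ maxSplits N ∧ u ++ ((N : ℤ) + 1) :: v = l := by
  obtain ⟨hl, hud⟩ := mem_upDownPerms.1 hl
  obtain ⟨u, v, rfl⟩ := List.mem_iff_append.1 (hl.mem_iff.2 (mem_baseList.2 ⟨by omega, le_rfl⟩))
  have hp := perm_baseList_succ_iff.1 hl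
  have hnd : (u ++ v).Nodup := hp.nodup_iff.2 (baseList_sortedLT N).nodup
  have hub : ∀ x ∈ u, x < N + 1 := fun x hx => lt_of_mem_baseList (hp.subset (by simp [hx]))
  have hvb : ∀ x ∈ v, x < N + 1 := fun x hx => lt_of_mem_baseList (hp.subset (by simp [hx]))
  have hlen : u.length + v.length = N := by
    rw [← List.length_append, hp.length_eq, length_baseList]
  have hodd := hud.odd_length_of_append_cons hub hvb (hlen ▸ hN) (by omega)
  obtain ⟨hu', hv'⟩ := (isUpDown_append_cons_iff hodd hub hvb).1 hud
  have hu : (u : Multiset ℤ) = u.toFinset.val := by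
    rw [List.toFinset_val, hnd.of_append_left.dedup]
  refine ⟨u.toFinset, u, v, mem_maxSplits.2 ⟨fun x hx => ?_, ?_, ⟨?_, hu'⟩, ?_, hv'⟩, rfl⟩
  · exact List.mem_toFinset.2 (hp.subset (List.mem_append_left _ (List.mem_toFinset.1 hx)))
  · rwa [List.toFinset_card_of_nodup hnd.of_append_left]
  · exact perm_sort_iff_coe_eq_val.2 hu
  · rw [perm_sort_iff_coe_eq_val, sdiff_val, val_toFinset_baseList, ← hu,
      ← Multiset.coe_eq_coe.2 hp, ← Multiset.coe_add, add_tsub_cancel_left]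

theorem card_upDownPerms_baseList_succ {N : ℕ} (hN : Even N) (hN0 : N ≠ 0) :
    #(upDownPerms (baseList (N + 1))) = #(maxSplits N) := by
  refine (card_nbij (fun p => p.2.1 ++ ((N : ℤ) + 1) :: p.2.2) (fun ⟨S, u, v⟩ h =>
    append_cons_mem_upDownPerms h) ?_ fun l hl => ?_).symm
  · rintro ⟨S, u, v⟩ hp ⟨S', u', v'⟩ hp' h
    have hM := bounds_of_mem_maxSplits hp
    obtain ⟨rfl, -, rfl⟩ := (List.append_cons_inj_of_notMem (fun h => (hM.1 _ h).false)
      (fun h => (hM.2 _ h).false)).1 h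
    obtain rfl : S = S' := val_inj.1 <| by
      rw [← perm_sort_iff_coe_eq_val.1 (mem_maxSplits.1 hp).2.2.1.1,
        ← perm_sort_iff_coe_eq_val.1 (mem_maxSplits.1 hp').2.2.1.1]
    rfl
  · obtain ⟨S, u, v, h, rfl⟩ := exists_mem_maxSplits hN hN0 hl
    exact ⟨⟨S, u, v⟩, h, rfl⟩

theorem eulerNum_succ_of_even {N : ℕ} (hN : Even N) (hN0 : N ≠ 0) :
    eulerNum (N + 1) =
      ∑ m ∈ range (N + 1), N.choose m * if Odd m then eulerNum m * eulerNum (N - m) else 0 := by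
  rw [eulerNum_eq_card, card_upDownPerms_baseList_succ hN hN0, card_maxSplits]

theorem eulerNum_two_mul_sub_one {n : ℕ} (hn : 2 ≤ n) :
    eulerNum (2 * n - 1) = ∑ i ∈ Icc 1 (n - 1),
      (2 * n - 2).choose (2 * i - 1) * (eulerNum (2 * i - 1) * eulerNum (2 * (n - i) - 1)) := by
  rw [show 2 * n - 1 = 2 * n - 2 + 1 by omega,
    eulerNum_succ_of_even ⟨n - 1, by omega⟩ (by omega)]
  simp_rw [mul_ite, mul_zero]
  rw [← sum_filter]
  symm
  refine sum_nbij' (fun i => 2 * i - 1) (fun m => (m + 1) / 2) ?_ ?_ ?_ ?_ ?_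
  any_goals
    intro x hx
    simp only [mem_Icc, mem_filter, mem_range, Nat.odd_iff] at hx ⊢
    omega
  intro i hi
  rw [mem_Icc] at hi
  rw [show 2 * n - 2 - (2 * i - 1) = 2 * (n - i) - 1 by omega]

noncomputable def sigmaRec (f : ℕ → ℚ) (n : ℕ) : ℚ :=
  (1 / (2 * (n : ℚ) - 1)) *
    ∑ i ∈ Icc 1 (n - 1), (Nat.choose (3 * n - 2) (3 * i - 1) : ℚ) *
      ((3 * (i : ℚ) - 1) * f i / 2) * ((3 * ((n : ℚ) - (i : ℚ)) - 1) * f (n - i) / 2)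

theorem eq_of_sigmaRec {f g : ℕ → ℚ} (h1 : f 1 = g 1)
    (hf : ∀ n, 2 ≤ n → f n = sigmaRec f n) (hg : ∀ n, 2 ≤ n → g n = sigmaRec g n) :
    ∀ n, 1 ≤ n → f n = g n := by
  intro n
  induction n using Nat.strong_induction_on with
  | _ n ih =>
    intro hn
    obtain rfl | hn := (by omega : n = 1 ∨ 2 ≤ n)
    · exact h1
    rw [hf n hn, hg n hn, sigmaRec, sigmaRec]
    congr 1
    refine sum_congr rfl fun i hi => ?_
    rw [mem_Icc] at hi
    rw [ih i (by omega) (by omega), ih (n - i) (by omega) (by omega)]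

noncomputable def sigmaClosedForm (n : ℕ) : ℚ :=
  ((3 * n - 2).factorial : ℚ) * (eulerNum (2 * n - 1) : ℚ) /
    (((2 * n - 1).factorial : ℚ) * 2 ^ (2 * n - 2))

theorem sigmaClosedForm_one : sigmaClosedForm 1 = 1 := by
  simp [sigmaClosedForm, eulerNum_one]

theorem sigmaClosedForm_succ (a : ℕ) :
    sigmaClosedForm (a + 1) =
      ((3 * a + 1).factorial : ℚ) * eulerNum (2 * a + 1) /
        ((2 * a + 1).factorial * 2 ^ (2 * a)) := by
  simp only [sigmaClosedForm, show 3 * (a + 1) - 2 = 3 * a + 1 by omega,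
    show 2 * (a + 1) - 1 = 2 * a + 1 by omega, show 2 * (a + 1) - 2 = 2 * a by omega]

theorem sigmaClosedForm_summand {n i : ℕ} (hi : 1 ≤ i) (hin : i < n) :
    ((3 * n - 2).choose (3 * i - 1) : ℚ) * ((3 * (i : ℚ) - 1) * sigmaClosedForm i / 2) *
        ((3 * ((n : ℚ) - i) - 1) * sigmaClosedForm (n - i) / 2) =
      (3 * n - 2).factorial / ((2 * n - 2).factorial * 2 ^ (2 * n - 2)) *
        ((2 * n - 2).choose (2 * i - 1) *
          (eulerNum (2 * i - 1) * eulerNum (2 * (n - i) - 1)) : ℕ) := by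
  obtain ⟨a, rfl⟩ : ∃ a, i = a + 1 := ⟨i - 1, by omega⟩
  obtain ⟨b, rfl⟩ : ∃ b, n = a + b + 2 := ⟨n - a - 2, by omega⟩
  rw [show a + b + 2 - (a + 1) = b + 1 by omega, sigmaClosedForm_succ, sigmaClosedForm_succ]
  simp only [show 3 * (a + b + 2) - 2 = 3 * a + 3 * b + 4 by omega,
    show 2 * (a + b + 2) - 2 = 2 * a + 2 * b + 2 by omega,
    show 2 * (a + 1) - 1 = 2 * a + 1 by omega,
    show 2 * (b + 1) - 1 = 2 * b + 1 by omega, show 3 * (a + 1) - 1 = 3 * a + 2 by omega]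
  rw [Nat.cast_mul, Nat.cast_choose ℚ (by omega), Nat.cast_choose ℚ (by omega),
    show 3 * a + 3 * b + 4 - (3 * a + 2) = (3 * b + 1) + 1 by omega,
    show 2 * a + 2 * b + 2 - (2 * a + 1) = 2 * b + 1 by omega,
    show 3 * a + 2 = (3 * a + 1) + 1 by omega,
    Nat.factorial_succ (3 * a + 1), Nat.factorial_succ (3 * b + 1)]
  push_cast
  field_simp
  ring

theorem sigmaClosedForm_rec {n : ℕ} (hn : 2 ≤ n) :
    sigmaClosedForm n = sigmaRec sigmaClosedForm n := by
  rw [sigmaRec, sum_congr rfl fun i hi => sigmaClosedForm_summand (mem_Icc.1 hi).1 (by grind),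
    ← mul_sum, ← Nat.cast_sum, ← eulerNum_two_mul_sub_one hn, sigmaClosedForm]
  obtain ⟨m, rfl⟩ : ∃ m, n = m + 2 := ⟨n - 2, by omega⟩
  simp only [show 2 * (m + 2) - 1 = (2 * m + 2) + 1 by omega,
    show 2 * (m + 2) - 2 = 2 * m + 2 by omega, Nat.factorial_succ (2 * m + 2)]
  have hm : (2 * ((m : ℚ) + 2) - 1) ≠ 0 := by linarith [m.cast_nonneg (α := ℚ)]
  push_cast
  field_simp
  ring

/-- The recursion for f_n = f^{σ_{3n-2}} determines f_n = (3n-2)! E_{2n-1} / ((2n-1)! 2^{2n-2}). -/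
theorem sigma_count (f : ℕ → ℚ) (h1 : f 1 = 1)
    (hrec : ∀ n : ℕ, 2 ≤ n →
      f n = (1 / (2 * (n : ℚ) - 1)) *
        ∑ i ∈ Finset.Icc 1 (n - 1), (Nat.choose (3 * n - 2) (3 * i - 1) : ℚ) *
          ((3 * (i : ℚ) - 1) * f i / 2) * ((3 * ((n : ℚ) - (i : ℚ)) - 1) * f (n - i) / 2)) :
    ∀ n : ℕ, 1 ≤ n →
      f n = ((3 * n - 2).factorial : ℚ) * (eulerNum (2 * n - 1) : ℚ) /
        (((2 * n - 1).factorial : ℚ) * 2 ^ (2 * n - 2)) :=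
  eq_of_sigmaRec (h1.trans sigmaClosedForm_one.symm) hrec fun _ => sigmaClosedForm_rec
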